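/- arXiv:1505.05627 — 4 statements merged into one kernel-verified Lean document; each statement's English description precedes it below -/
import Mathlib

section
/- Define f(t) = (1/2)·log(1 - t + t²) + t/2 - t²/4 for real t. Then for all t with 0 ≤ t ≤ 2, f(t) ≥ t³/36. -/
/-! Twice the difference `f t - t³/36` has derivative `t² (11 - 5t - t²) / (6 (1 - t + t²))`,
which is nonnegative up to `t = 8/5`; since the difference vanishes at `0`, this settles
`[0, 8/5]`. On `[8/5, 2]` the crude bound `log (1 - t + t²) ≥ log (49/25) ≥ 24/49` is enough. -/

open Real Set

lemma one_sub_add_sq_pos (t : ℝ) : 0 < 1 - t + t ^ 2 := by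
  nlinarith [sq_nonneg (t - 1 / 2)]

/-- Twice `f t - t³/36`. -/
noncomputable def cubicDefect (t : ℝ) : ℝ :=
  log (1 - t + t ^ 2) + t - t ^ 2 / 2 - t ^ 3 / 18

lemma hasDerivAt_cubicDefect (t : ℝ) :
    HasDerivAt cubicDefect (t ^ 2 * (11 - 5 * t - t ^ 2) / (6 * (1 - t + t ^ 2))) t := by
  have hq : HasDerivAt (fun s : ℝ ↦ 1 - s + s ^ 2) (-1 + 2 * t) t := by
    refine (((hasDerivAt_id' t).const_sub 1).add (hasDerivAt_pow 2 t)).congr_deriv ?_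
    ring
  have h := (((hq.log (one_sub_add_sq_pos t).ne').add (hasDerivAt_id' t)).sub
    ((hasDerivAt_pow 2 t).div_const 2)).sub ((hasDerivAt_pow 3 t).div_const 18)
  refine h.congr_deriv ?_
  have := (one_sub_add_sq_pos t).ne'
  field_simp
  ring

lemma monotoneOn_cubicDefect : MonotoneOn cubicDefect (Icc 0 (8 / 5)) := by
  refine monotoneOn_of_hasDerivWithinAt_nonneg (convex_Icc _ _)
    (fun t _ ↦ (hasDerivAt_cubicDefect t).continuousAt.continuousWithinAt)
    (fun t _ ↦ (hasDerivAt_cubicDefect t).hasDerivWithinAt) ?_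
  intro t ht
  rw [interior_Icc] at ht
  have : 0 ≤ 11 - 5 * t - t ^ 2 := by nlinarith [ht.1, ht.2]
  have := one_sub_add_sq_pos t
  positivity

lemma cubicDefect_nonneg {t : ℝ} (ht0 : 0 ≤ t) (ht : t ≤ 8 / 5) : 0 ≤ cubicDefect t := by
  have h := monotoneOn_cubicDefect (left_mem_Icc.2 (by norm_num)) ⟨ht0, ht⟩ ht0
  simpa [cubicDefect] using h

lemma log_one_sub_add_sq_ge {t : ℝ} (ht : 8 / 5 ≤ t) : 24 / 49 ≤ log (1 - t + t ^ 2) := by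
  have hq : 49 / 25 ≤ 1 - t + t ^ 2 := by nlinarith
  calc (24 / 49 : ℝ) = 1 - (49 / 25)⁻¹ := by norm_num
    _ ≤ log (49 / 25) := one_sub_inv_le_log_of_pos (by norm_num)
    _ ≤ log (1 - t + t ^ 2) := log_le_log (by norm_num) hq

/-- f(t) = (1/2)·log(1 - t + t²) + t/2 - t²/4 satisfies f(t) ≥ t³/36 on [0,2]. -/
theorem stmt_1 (t : ℝ) (ht0 : 0 ≤ t) (ht2 : t ≤ 2) :
    (1 / 2) * Real.log (1 - t + t ^ 2) + t / 2 - t ^ 2 / 4 ≥ t ^ 3 / 36 := by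
  rcases le_or_gt t (8 / 5) with ht | ht
  · have := cubicDefect_nonneg ht0 ht
    rw [cubicDefect] at this
    linarith
  · have := log_one_sub_add_sq_ge ht.le
    -- `36 (12/49 + t/2 - t²/4 - t³/36) = (2 - t) (t² + 11 t + 4) + 40/49`
    linarith [mul_nonneg (sub_nonneg.2 ht2) (by positivity : (0 : ℝ) ≤ t ^ 2 + 11 * t + 4)]
end

section
/- Define N(t) = 1 - t/(1+t)² and H(t) = log(1+t) - ((2t+t²)/2)·(log(N(t)) + 1) for t ≥ 0. Then there exists a constant c₀ > 0 such that H(t) ≤ -c₀·t³/(1+t) for all t ≥ 0. -/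
/-!
Both logarithms are bounded by `log y ≤ (y - y⁻¹) / 2 = sinh (log y)` for `y ≥ 1`, applied to
`y = 1 + t` and to `y = N(t)⁻¹ = (1 + t)² / (1 + t + t²)`; the coefficient `(2t + t²) / 2` of
`-log N(t)` is nonnegative. The resulting rational upper bound for `H(t)` equals
`-t³ / (2(1 + t)) - (t⁴ + 2t⁵) / (4(1 + t)²(1 + t + t²))`, so `c₀ = 1/2` works.
-/

open Real

theorem Real.log_le_sub_inv_div_two {x : ℝ} (hx : 1 ≤ x) : log x ≤ (x - x⁻¹) / 2 := by
  rw [← sinh_log (by positivity)]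
  exact self_le_sinh_iff.mpr (log_nonneg hx)

lemma one_sub_div_one_add_sq_eq {t : ℝ} (ht : 0 ≤ t) :
    1 - t / (1 + t) ^ 2 = (1 + t + t ^ 2) / (1 + t) ^ 2 := by
  field_simp
  ring

lemma one_le_inv_one_sub_div_one_add_sq {t : ℝ} (ht : 0 ≤ t) :
    1 ≤ (1 - t / (1 + t) ^ 2)⁻¹ := by
  rw [one_sub_div_one_add_sq_eq ht, inv_div, one_le_div (by positivity)]
  nlinarith

lemma sinh_bound_le_neg_cube_div {t : ℝ} (ht : 0 ≤ t) :
    ((1 + t) - (1 + t)⁻¹) / 2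
        + (2 * t + t ^ 2) / 2 * (((1 - t / (1 + t) ^ 2)⁻¹ - (1 - t / (1 + t) ^ 2)) / 2 - 1)
      ≤ -(1 / 2) * t ^ 3 / (1 + t) := by
  rw [one_sub_div_one_add_sq_eq ht, ← sub_nonpos]
  have gap : ((1 + t) - (1 + t)⁻¹) / 2
        + (2 * t + t ^ 2) / 2
          * ((((1 + t + t ^ 2) / (1 + t) ^ 2)⁻¹ - (1 + t + t ^ 2) / (1 + t) ^ 2) / 2 - 1)
        - -(1 / 2) * t ^ 3 / (1 + t)
      = -((t ^ 4 + 2 * t ^ 5) / (4 * (1 + t) ^ 2 * (1 + t + t ^ 2))) := by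
    field_simp
    ring
  rw [gap, neg_nonpos]
  positivity

/-- with N(t) = 1 - t/(1+t)² and
H(t) = log(1+t) - ((2t+t²)/2)·(log N(t) + 1), there is c₀ > 0 with
H(t) ≤ -c₀ t³/(1+t) for all t ≥ 0. -/
theorem stmt_4 :
    ∃ c₀ > (0 : ℝ), ∀ t : ℝ, 0 ≤ t →
      Real.log (1 + t) - ((2 * t + t ^ 2) / 2) * (Real.log (1 - t / (1 + t) ^ 2) + 1)
        ≤ -c₀ * t ^ 3 / (1 + t) := by
  refine ⟨1 / 2, by norm_num, fun t ht => ?_⟩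
  set N := 1 - t / (1 + t) ^ 2
  have hlog : log (1 + t) ≤ ((1 + t) - (1 + t)⁻¹) / 2 :=
    log_le_sub_inv_div_two (by linarith)
  have hlogN : -log N ≤ (N⁻¹ - N) / 2 := by
    simpa only [log_inv, inv_inv] using
      log_le_sub_inv_div_two (one_le_inv_one_sub_div_one_add_sq ht)
  have hA : 0 ≤ (2 * t + t ^ 2) / 2 := by positivity
  calc log (1 + t) - (2 * t + t ^ 2) / 2 * (log N + 1)
      ≤ ((1 + t) - (1 + t)⁻¹) / 2 + (2 * t + t ^ 2) / 2 * ((N⁻¹ - N) / 2 - 1) := by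
        linarith [mul_le_mul_of_nonneg_left hlogN hA]
    _ ≤ -(1 / 2) * t ^ 3 / (1 + t) := sinh_bound_le_neg_cube_div ht
end

section
/- Let μ be a finite Borel measure on ℝ with density at most 1 and connected support. Then for every c > 0, ∫ log(1 + c/|x|) dμ(x) ≤ (c + μ(ℝ))·log 4. -/
/-!
For every `r > 0`, `log (1 + c / |x|) ≤ log (1 + c / r) + log⁺ (r / |x|)`. The first term has
`μ`-integral `μ(ℝ) · log (1 + c / r)`; the second is Lebesgue integrable with integral `2 r`, so
`μ ≤ volume` bounds its `μ`-integral by `2 r`. Choosing `r = μ(ℝ) / 2` and bounding `log` by its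
tangent line at `2` gives the claim, since `log 2 > 1 / 2`.
-/

open MeasureTheory Set Real

section posLogDivAbs

variable {r : ℝ}

lemma posLog_div_abs_eq_zero_of_notMem_Icc (hr : 0 ≤ r) {x : ℝ} (hx : x ∉ Icc (-r) r) :
    log⁺ (r / |x|) = 0 := by
  have hrx : r < |x| := lt_abs.2 (by contrapose! hx; exact ⟨by linarith, hx.1⟩)
  rw [posLog_eq_zero_iff, abs_of_nonneg (by positivity)]
  exact div_le_one_of_le₀ hrx.le (by positivity)

lemma posLog_div_abs_ae_eq (hr : 0 < r) :
    (fun x ↦ log⁺ (r / |x|)) =ᵐ[volume.restrict (Icc (-r) r)] fun x ↦ log r - log x := by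
  rw [Filter.EventuallyEq, ae_restrict_iff' measurableSet_Icc]
  filter_upwards [Measure.ae_ne volume 0] with x hx0 hx
  have habs : 0 < |x| := abs_pos.2 hx0
  have hge : 1 ≤ r / |x| := (one_le_div habs).2 (abs_le.2 hx)
  rw [posLog_eq_log (hge.trans (le_abs_self _)), log_div hr.ne' habs.ne', log_abs]

lemma integral_log_sub_log_neg_self (r : ℝ) : ∫ x in -r..r, (log r - log x) = 2 * r := by
  rw [intervalIntegral.integral_sub intervalIntegrable_const
    intervalIntegral.intervalIntegrable_log', intervalIntegral.integral_const, integral_log,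
    log_neg_eq_log, smul_eq_mul]
  ring

lemma integrable_posLog_div_abs (hr : 0 < r) : Integrable fun x : ℝ ↦ log⁺ (r / |x|) := by
  have hIcc : IntegrableOn (fun x ↦ log r - log x) (Icc (-r) r) := by
    rw [← intervalIntegrable_iff_integrableOn_Icc_of_le (by linarith)]
    exact intervalIntegrable_const.sub intervalIntegral.intervalIntegrable_log'
  exact (hIcc.congr_fun_ae (posLog_div_abs_ae_eq hr).symm).integrable_of_forall_notMem_eq_zero
    fun _ ↦ posLog_div_abs_eq_zero_of_notMem_Icc hr.le

lemma integral_posLog_div_abs (hr : 0 < r) : ∫ x : ℝ, log⁺ (r / |x|) = 2 * r := by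
  rw [← setIntegral_eq_integral_of_forall_compl_eq_zero
      fun _ ↦ posLog_div_abs_eq_zero_of_notMem_Icc hr.le,
    integral_congr_ae (posLog_div_abs_ae_eq hr), integral_Icc_eq_integral_Ioc,
    ← intervalIntegral.integral_of_le (by linarith), integral_log_sub_log_neg_self]

end posLogDivAbs

lemma log_one_add_div_abs_le {c r : ℝ} (hc : 0 ≤ c) (hr : 0 < r) (x : ℝ) :
    log (1 + c / |x|) ≤ log (1 + c / r) + log⁺ (r / |x|) := by
  rcases eq_or_ne x 0 with rfl | hx
  · simpa using log_nonneg (le_add_of_nonneg_right (div_nonneg hc hr.le))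
  have habs : 0 < |x| := abs_pos.2 hx
  rw [posLog_eq_log_max_one (by positivity), ← log_mul (by positivity) (by positivity)]
  refine log_le_log (by positivity) ?_
  rw [mul_max_of_nonneg _ _ (by positivity), mul_one, le_max_iff]
  rcases le_total r |x| with hrx | hxr
  · left
    gcongr
  · right
    rw [add_mul, one_mul, div_mul_div_cancel₀ hr.ne']
    gcongr
    exact (one_le_div habs).2 hxr

lemma integral_log_one_add_div_abs_le (μ : Measure ℝ) [IsFiniteMeasure μ] (hμ : μ ≤ volume)
    {c r : ℝ} (hc : 0 ≤ c) (hr : 0 < r) :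
    ∫ x, log (1 + c / |x|) ∂μ ≤ μ.real univ * log (1 + c / r) + 2 * r := by
  have hint : Integrable (fun x : ℝ ↦ log⁺ (r / |x|)) μ :=
    (integrable_posLog_div_abs hr).mono_measure hμ
  calc ∫ x, log (1 + c / |x|) ∂μ ≤ ∫ x, (log (1 + c / r) + log⁺ (r / |x|)) ∂μ :=
        integral_mono_of_nonneg
          (.of_forall fun _ ↦ log_nonneg (le_add_of_nonneg_right (by positivity)))
          ((integrable_const _).add hint) (.of_forall (log_one_add_div_abs_le hc hr))
    _ = μ.real univ * log (1 + c / r) + ∫ x, log⁺ (r / |x|) ∂μ := by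
        rw [integral_add (integrable_const _) hint, integral_const, smul_eq_mul]
    _ ≤ μ.real univ * log (1 + c / r) + 2 * r := by
        grw [integral_mono_measure hμ (.of_forall fun _ ↦ posLog_nonneg)
          (integrable_posLog_div_abs hr), integral_posLog_div_abs hr]

lemma mul_log_one_add_div_half_add_le {M c : ℝ} (hM : 0 < M) (hc : 0 ≤ c) :
    M * log (1 + c / (M / 2)) + 2 * (M / 2) ≤ (c + M) * log 4 := by
  have htangent : log (1 + c / (M / 2)) ≤ log 2 + (1 + c / (M / 2)) / 2 - 1 := by
    have := log_le_sub_one_of_pos (x := (1 + c / (M / 2)) / 2) (by positivity)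
    rw [log_div (by positivity) two_ne_zero] at this
    linarith
  have hlog4 : log 4 = 2 * log 2 := by
    rw [show (4 : ℝ) = 2 ^ 2 by norm_num, log_pow, Nat.cast_ofNat]
  have hlog2 : 1 / 2 < log 2 := lt_trans (by norm_num) log_two_gt_d9
  calc M * log (1 + c / (M / 2)) + 2 * (M / 2)
      ≤ M * (log 2 + (1 + c / (M / 2)) / 2 - 1) + M := by gcongr; linarith
    _ = M * log 2 + c + M / 2 := by field_simp; ring
    _ ≤ (c + M) * log 4 := by rw [hlog4]; nlinarith

theorem stmt_7_general (μ : Measure ℝ) [IsFiniteMeasure μ] (hμ : μ ≤ volume)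
    (c : ℝ) (hc : 0 < c) :
    ∫ x, Real.log (1 + c / |x|) ∂μ ≤ (c + (μ Set.univ).toReal) * Real.log 4 := by
  rcases eq_zero_or_neZero μ with rfl | _
  · simpa using mul_nonneg hc.le (log_nonneg (by norm_num : (1 : ℝ) ≤ 4))
  calc ∫ x, log (1 + c / |x|) ∂μ
      ≤ μ.real univ * log (1 + c / (μ.real univ / 2)) + 2 * (μ.real univ / 2) :=
        integral_log_one_add_div_abs_le μ hμ hc.le (half_pos measureReal_univ_pos)
    _ ≤ (c + μ.real univ) * log 4 := mul_log_one_add_div_half_add_le measureReal_univ_pos hc.le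

/-- if μ is a finite measure on ℝ with density at most 1 (i.e. μ ≤ Lebesgue)
and connected support, then for every c > 0, ∫ log(1 + c/|x|) dμ(x) ≤ (c + μ(ℝ))·log 4. -/
theorem stmt_7 (μ : Measure ℝ) [IsFiniteMeasure μ] (hμ : μ ≤ volume)
    (S : Set ℝ) (hS : IsConnected S) (hsupp : μ Sᶜ = 0)
    (c : ℝ) (hc : 0 < c) :
    ∫ x, Real.log (1 + c / |x|) ∂μ ≤ (c + (μ Set.univ).toReal) * Real.log 4 :=
  stmt_7_general μ hμ c hc
end

section
/- Let α > 3, β ∈ (0,1), and a ∈ ℝ with a = α/12 - β/2. Then ∑_{ℓ=k+1}^{N} ℓ^{a}·k^{a}/(ℓ^{α/2} - k^{α/2}) = O(k^{1 - α/3 - β}·log k) uniformly in 1 ≤ k < N, i.e., there is a constant C (depending only on α, β) with ∑_{ℓ=k+1}^{N} ℓ^{a}k^{a}/(ℓ^{α/2} - k^{α/2}) ≤ C·k^{1-α/3-β}·log k for all k ≥ 2 and N > k. -/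
/-!
Write `q = α/2` and `a = α/12 - β/2`, so that `a < q - 1` and `2a - q + 1 = 1 - α/3 - β`.
For `k < ℓ ≤ 2k`, convexity gives `ℓ^q - k^q ≥ k^(q-1) (ℓ - k)` and `ℓ^a ≤ 2^|a| k^a`, so these
terms are at most `2^|a| k^(2a-q+1) / (ℓ - k)`; their sum is a harmonic sum, `≤ 1 + log k`.
For `ℓ > 2k`, `ℓ^q - k^q ≥ (1 - 2^(-q)) ℓ^q`, and comparing `∑_{ℓ > 2k} ℓ^(a-q)` with an integral
(convergent since `a - q < -1`) bounds that part by a constant times `k^(2a-q+1)`.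
-/

open Finset Real

lemma sum_Ioc_inv_sub_eq_harmonic (k n : ℕ) :
    ∑ ℓ ∈ Ioc k (k + n), ((ℓ : ℝ) - k)⁻¹ = harmonic n := by
  have hshift : Ioc k (k + n) = (Ioc 0 n).image (· + k) := by
    rw [image_add_right_Ioc, zero_add, add_comm]
  rw [harmonic_eq_sum_Icc, show Icc 1 n = Ioc 0 n from Icc_add_one_left_eq_Ioc 0 n, hshift,
    sum_image (fun _ _ _ _ => Nat.add_right_cancel)]
  push_cast
  simp

lemma sum_Ioc_rpow_le_of_lt_neg_one {s : ℝ} (hs : s < -1) {m : ℕ} (hm : 0 < m) (N : ℕ) :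
    ∑ ℓ ∈ Ioc m N, (ℓ : ℝ) ^ s ≤ (m : ℝ) ^ (s + 1) / (-s - 1) := by
  have hm' : (0 : ℝ) < m := by exact_mod_cast hm
  rcases le_total N m with hNm | hmN
  · rw [Ioc_eq_empty_of_le hNm, sum_empty]
    exact div_nonneg (by positivity) (by linarith)
  have hanti : AntitoneOn (fun x : ℝ => x ^ s) (Set.Icc m N) := fun x hx y _ hxy =>
    rpow_le_rpow_of_nonpos (hm'.trans_le hx.1) hxy (by linarith)
  have h0 : (0 : ℝ) ∉ Set.uIcc (m : ℝ) N := by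
    rw [Set.uIcc_of_le (by exact_mod_cast hmN)]
    exact fun h => hm'.not_ge h.1
  calc ∑ ℓ ∈ Ioc m N, (ℓ : ℝ) ^ s = ∑ i ∈ Ico m N, ((i + 1 : ℕ) : ℝ) ^ s := by
        rw [← Ico_add_one_add_one_eq_Ioc, ← image_add_right_Ico m N 1,
          sum_image (fun _ _ _ _ => Nat.add_right_cancel)]
    _ ≤ ∫ x in (m : ℝ)..N, x ^ s := hanti.sum_le_integral_Ico hmN
    _ = ((N : ℝ) ^ (s + 1) - (m : ℝ) ^ (s + 1)) / (s + 1) :=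
        integral_rpow (Or.inr ⟨by linarith, h0⟩)
    _ ≤ (m : ℝ) ^ (s + 1) / (-s - 1) := by
        rw [← neg_div_neg_eq, neg_sub, neg_add']
        gcongr
        · linarith
        · exact sub_le_self _ (by positivity)

lemma rpow_sub_one_mul_sub_le_rpow_sub_rpow {x y q : ℝ} (hx : 0 < x) (hxy : x ≤ y) (hq : 1 ≤ q) :
    x ^ (q - 1) * (y - x) ≤ y ^ q - x ^ q := by
  have hy : 0 < y := hx.trans_le hxy
  have hmono : x ^ (q - 1) ≤ y ^ (q - 1) := rpow_le_rpow hx.le hxy (by linarith)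
  have hsplit : ∀ z : ℝ, 0 < z → z ^ q = z ^ (q - 1) * z := fun z hz => by
    rw [← rpow_add_one hz.ne', sub_add_cancel]
  rw [hsplit x hx, hsplit y hy]
  nlinarith

lemma one_sub_two_rpow_neg_pos {q : ℝ} (hq : 0 < q) : 0 < 1 - (2 : ℝ) ^ (-q) :=
  sub_pos.2 (rpow_lt_one_of_one_lt_of_neg one_lt_two (neg_neg_of_pos hq))

lemma one_sub_two_rpow_neg_mul_le_rpow_sub_rpow {x y q : ℝ} (hx : 0 ≤ x) (hxy : 2 * x ≤ y)
    (hq : 0 ≤ q) : (1 - 2 ^ (-q)) * y ^ q ≤ y ^ q - x ^ q := by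
  have : x ^ q ≤ 2 ^ (-q) * y ^ q := by
    rw [rpow_neg zero_le_two, ← div_eq_inv_mul, ← div_rpow (by linarith) zero_le_two]
    exact rpow_le_rpow hx (by linarith) hq
  linarith

lemma rpow_le_two_rpow_abs_mul_rpow {x y a : ℝ} (hx : 0 < x) (hxy : x ≤ y) (hy : y ≤ 2 * x) :
    y ^ a ≤ 2 ^ |a| * x ^ a := by
  rcases le_total 0 a with ha | ha
  · calc y ^ a ≤ (2 * x) ^ a := rpow_le_rpow (hx.le.trans hxy) hy ha
      _ = 2 ^ |a| * x ^ a := by rw [mul_rpow zero_le_two hx.le, abs_of_nonneg ha]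
  · calc y ^ a ≤ x ^ a := rpow_le_rpow_of_nonpos hx hxy ha
      _ ≤ 2 ^ |a| * x ^ a :=
        le_mul_of_one_le_left (by positivity) (one_le_rpow one_le_two (abs_nonneg a))

lemma rpow_mul_rpow_div_rpow_sub_rpow_le_of_le_two_mul {a q k ℓ : ℝ} (hq : 1 ≤ q) (hk : 0 < k)
    (hkℓ : k < ℓ) (hℓ : ℓ ≤ 2 * k) :
    ℓ ^ a * k ^ a / (ℓ ^ q - k ^ q) ≤ 2 ^ |a| * k ^ (2 * a - q + 1) * (ℓ - k)⁻¹ := by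
  have hexp : k ^ (2 * a - q + 1) = k ^ a * k ^ a / k ^ (q - 1) := by
    rw [← rpow_add hk, ← rpow_sub hk]
    ring_nf
  calc ℓ ^ a * k ^ a / (ℓ ^ q - k ^ q)
      ≤ 2 ^ |a| * k ^ a * k ^ a / (k ^ (q - 1) * (ℓ - k)) := by
        gcongr
        · exact rpow_le_two_rpow_abs_mul_rpow hk hkℓ.le hℓ
        · exact rpow_sub_one_mul_sub_le_rpow_sub_rpow hk hkℓ.le hq
    _ = 2 ^ |a| * k ^ (2 * a - q + 1) * (ℓ - k)⁻¹ := by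
        rw [hexp]
        field_simp

lemma rpow_mul_rpow_div_rpow_sub_rpow_le_of_two_mul_le {a q k ℓ : ℝ} (hq : 0 < q) (hk : 0 < k)
    (hℓ : 2 * k ≤ ℓ) :
    ℓ ^ a * k ^ a / (ℓ ^ q - k ^ q) ≤ (1 - 2 ^ (-q))⁻¹ * k ^ a * ℓ ^ (a - q) := by
  have hℓ0 : 0 < ℓ := by linarith
  have hc := one_sub_two_rpow_neg_pos hq
  calc ℓ ^ a * k ^ a / (ℓ ^ q - k ^ q)
      ≤ ℓ ^ a * k ^ a / ((1 - 2 ^ (-q)) * ℓ ^ q) :=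
        div_le_div_of_nonneg_left (by positivity) (by positivity)
          (one_sub_two_rpow_neg_mul_le_rpow_sub_rpow hk.le hℓ hq.le)
    _ = (1 - 2 ^ (-q))⁻¹ * k ^ a * ℓ ^ (a - q) := by
        rw [rpow_sub hℓ0]
        field_simp

lemma sum_rpow_div_rpow_sub_rpow_Ioc_self_add_self_le {a q : ℝ} (hq : 1 ≤ q) {k : ℕ} (hk : 0 < k) :
    ∑ ℓ ∈ Ioc k (k + k), (ℓ : ℝ) ^ a * (k : ℝ) ^ a / ((ℓ : ℝ) ^ q - (k : ℝ) ^ q)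
      ≤ 2 ^ |a| * (k : ℝ) ^ (2 * a - q + 1) * (1 + log k) := by
  calc ∑ ℓ ∈ Ioc k (k + k), (ℓ : ℝ) ^ a * (k : ℝ) ^ a / ((ℓ : ℝ) ^ q - (k : ℝ) ^ q)
      ≤ ∑ ℓ ∈ Ioc k (k + k), 2 ^ |a| * (k : ℝ) ^ (2 * a - q + 1) * ((ℓ : ℝ) - k)⁻¹ := by
        refine sum_le_sum fun ℓ hℓ => ?_
        obtain ⟨hkℓ, hℓk⟩ := mem_Ioc.1 hℓ
        refine rpow_mul_rpow_div_rpow_sub_rpow_le_of_le_two_mul hq (by exact_mod_cast hk)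
          (by exact_mod_cast hkℓ) ?_
        rw [two_mul]
        exact_mod_cast hℓk
    _ = 2 ^ |a| * (k : ℝ) ^ (2 * a - q + 1) * harmonic k := by
        rw [← mul_sum, sum_Ioc_inv_sub_eq_harmonic]
    _ ≤ 2 ^ |a| * (k : ℝ) ^ (2 * a - q + 1) * (1 + log k) := by
        gcongr
        exact harmonic_le_one_add_log k

lemma sum_rpow_div_rpow_sub_rpow_Ioc_add_self_le {a q : ℝ} (hq : 0 < q) (haq : a < q - 1)
    {k : ℕ} (hk : 0 < k) (N : ℕ) :
    ∑ ℓ ∈ Ioc (k + k) N, (ℓ : ℝ) ^ a * (k : ℝ) ^ a / ((ℓ : ℝ) ^ q - (k : ℝ) ^ q)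
      ≤ (1 - 2 ^ (-q))⁻¹ / (q - a - 1) * (k : ℝ) ^ (2 * a - q + 1) := by
  have hk' : (0 : ℝ) < k := by exact_mod_cast hk
  have hc := one_sub_two_rpow_neg_pos hq
  calc ∑ ℓ ∈ Ioc (k + k) N, (ℓ : ℝ) ^ a * (k : ℝ) ^ a / ((ℓ : ℝ) ^ q - (k : ℝ) ^ q)
      ≤ ∑ ℓ ∈ Ioc (k + k) N, (1 - 2 ^ (-q))⁻¹ * (k : ℝ) ^ a * (ℓ : ℝ) ^ (a - q) := by
        refine sum_le_sum fun ℓ hℓ => ?_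
        refine rpow_mul_rpow_div_rpow_sub_rpow_le_of_two_mul_le hq hk' ?_
        rw [two_mul]
        exact_mod_cast (mem_Ioc.1 hℓ).1.le
    _ ≤ (1 - 2 ^ (-q))⁻¹ * (k : ℝ) ^ a * (((k + k : ℕ) : ℝ) ^ (a - q + 1) / (q - a - 1)) := by
        rw [← mul_sum, ← neg_sub a q]
        gcongr
        exact sum_Ioc_rpow_le_of_lt_neg_one (by linarith) (by omega) N
    _ ≤ (1 - 2 ^ (-q))⁻¹ * (k : ℝ) ^ a * ((k : ℝ) ^ (a - q + 1) / (q - a - 1)) := by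
        refine mul_le_mul_of_nonneg_left (div_le_div_of_nonneg_right ?_ (by linarith))
          (by positivity)
        exact rpow_le_rpow_of_nonpos hk' (by push_cast; linarith) (by linarith)
    _ = (1 - 2 ^ (-q))⁻¹ / (q - a - 1) * (k : ℝ) ^ (2 * a - q + 1) := by
        rw [show 2 * a - q + 1 = a + (a - q + 1) by ring, rpow_add hk' a (a - q + 1)]
        ring

lemma rpow_mul_rpow_div_rpow_sub_rpow_nonneg {a q k ℓ : ℝ} (hq : 0 ≤ q) (hk : 0 ≤ k)
    (hkℓ : k ≤ ℓ) : 0 ≤ ℓ ^ a * k ^ a / (ℓ ^ q - k ^ q) :=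
  div_nonneg (mul_nonneg (rpow_nonneg (hk.trans hkℓ) a) (rpow_nonneg hk a))
    (sub_nonneg.2 (rpow_le_rpow hk hkℓ hq))

theorem sum_rpow_div_rpow_sub_rpow_Ioc_le {a q : ℝ} (hq : 1 ≤ q) (haq : a < q - 1)
    {k : ℕ} (hk : 0 < k) (N : ℕ) :
    ∑ ℓ ∈ Ioc k N, (ℓ : ℝ) ^ a * (k : ℝ) ^ a / ((ℓ : ℝ) ^ q - (k : ℝ) ^ q)
      ≤ (2 ^ |a| * (1 + log k) + (1 - 2 ^ (-q))⁻¹ / (q - a - 1)) * (k : ℝ) ^ (2 * a - q + 1) := by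
  set f : ℕ → ℝ := fun ℓ => (ℓ : ℝ) ^ a * (k : ℝ) ^ a / ((ℓ : ℝ) ^ q - (k : ℝ) ^ q)
  have hnear := sum_rpow_div_rpow_sub_rpow_Ioc_self_add_self_le (a := a) hq hk
  have hfar := sum_rpow_div_rpow_sub_rpow_Ioc_add_self_le (by linarith) haq hk (max N (k + k))
  calc ∑ ℓ ∈ Ioc k N, f ℓ ≤ ∑ ℓ ∈ Ioc k (max N (k + k)), f ℓ :=
        sum_le_sum_of_subset_of_nonneg (Ioc_subset_Ioc_right (le_max_left _ _))
          fun ℓ hℓ _ => rpow_mul_rpow_div_rpow_sub_rpow_nonneg (by linarith) (Nat.cast_nonneg k)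
            (by exact_mod_cast (mem_Ioc.1 hℓ).1.le)
    _ = ∑ ℓ ∈ Ioc k (k + k), f ℓ + ∑ ℓ ∈ Ioc (k + k) (max N (k + k)), f ℓ :=
        (sum_Ioc_consecutive f (by omega) (le_max_right _ _)).symm
    _ ≤ _ := by linarith

lemma le_div_log_two_mul_log {c : ℝ} (hc : 0 ≤ c) {k : ℕ} (hk : 2 ≤ k) :
    c ≤ c / log 2 * log k := by
  rw [div_mul_eq_mul_div, le_div_iff₀ (log_pos one_lt_two)]
  exact mul_le_mul_of_nonneg_left (log_le_log two_pos (by exact_mod_cast hk)) hc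

theorem stmt_11_general (α β : ℝ) (hα : 3 < α) (hβ0 : 0 < β) :
    ∃ C > (0 : ℝ), ∀ k N : ℕ, 2 ≤ k → k < N →
      ∑ ℓ ∈ Finset.Ioc k N,
          ((ℓ : ℝ) ^ (α / 12 - β / 2) * (k : ℝ) ^ (α / 12 - β / 2))
            / ((ℓ : ℝ) ^ (α / 2) - (k : ℝ) ^ (α / 2))
        ≤ C * (k : ℝ) ^ (1 - α / 3 - β) * Real.log k := by
  set a := α / 12 - β / 2 with ha
  set q := α / 2 with hq_def
  have hq : 1 ≤ q := by linarith
  have haq : a < q - 1 := by linarith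
  set A : ℝ := 2 ^ |a|
  set B := (1 - 2 ^ (-q))⁻¹ / (q - a - 1)
  have hA : 0 < A := by positivity
  have hB : 0 < B := div_pos (inv_pos.2 (one_sub_two_rpow_neg_pos (by linarith))) (by linarith)
  refine ⟨A / log 2 + A + B / log 2, by positivity, fun k N hk _ => ?_⟩
  have hA' := le_div_log_two_mul_log hA.le hk
  have hB' := le_div_log_two_mul_log hB.le hk
  calc _ ≤ (A * (1 + log k) + B) * (k : ℝ) ^ (2 * a - q + 1) :=
        sum_rpow_div_rpow_sub_rpow_Ioc_le hq haq (by omega) N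
    _ ≤ (A / log 2 + A + B / log 2) * log k * (k : ℝ) ^ (2 * a - q + 1) := by
        gcongr
        linarith
    _ = _ := by
        rw [show 2 * a - q + 1 = 1 - α / 3 - β by ring]
        ring

/-- for α > 3, β ∈ (0,1), a = α/12 - β/2, there is C > 0 with
∑_{ℓ=k+1}^{N} ℓ^a k^a/(ℓ^{α/2} - k^{α/2}) ≤ C·k^{1-α/3-β}·log k for all k ≥ 2, N > k. -/
theorem stmt_11 (α β : ℝ) (hα : 3 < α) (hβ0 : 0 < β) (hβ1 : β < 1) :
    ∃ C > (0 : ℝ), ∀ k N : ℕ, 2 ≤ k → k < N →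
      ∑ ℓ ∈ Finset.Ioc k N,
          ((ℓ : ℝ) ^ (α / 12 - β / 2) * (k : ℝ) ^ (α / 12 - β / 2))
            / ((ℓ : ℝ) ^ (α / 2) - (k : ℝ) ^ (α / 2))
        ≤ C * (k : ℝ) ^ (1 - α / 3 - β) * Real.log k :=
  stmt_11_general α β hα hβ0
end
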